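/- Let $Z:[0,1]^d\to\mathbb{R}$ have partial derivatives up to order $|\mathbf s|$ with all derivatives of order $|\mathbf s|$ Hölder continuous of exponent $\gamma\in(0,1]$ with constant $M$ in sup-norm, and all derivatives of order $\le|\mathbf s|$ bounded by $M$. Suppose weights $w_{\mathbf j}(x)$ satisfy: $\sum_{\mathbf j}(x_{\mathbf j}-x)^{\mathbf r}w_{\mathbf j}(x)=\delta_{\mathbf r,\mathbf s}\,\mathbf s!$ for $|\mathbf r|\le|\mathbf s|$; $w_{\mathbf j}(x)=0$ if $\|x-x_{\mathbf j}\|_\infty>h$; and $\sum_{\mathbf j}|w_{\mathbf j}(x)|\le C_3 h^{-|\mathbf s|}$. Then $\sup_{x\in[0,1]^d}\big|\sum_{\mathbf j}w_{\mathbf j}(x)Z(x_{\mathbf j})-\partial^{\mathbf s}Z(x)\big|\le M\,h^{\gamma}\,C_3\sum_{|\mathbf k|=|\mathbf s|}\frac{1}{\mathbf k!}$. -/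

import Mathlib

/-!
Expand `Z = D 0` around `x` to order `|s|`. Summed against the weights, the moment conditions
annihilate every Taylor term except the `s`-th, which they turn into `∂^s Z(x)`; the estimator
error is therefore `∑ⱼ wⱼ(x) R(xⱼ)` with `R` the Taylor remainder.

Only coordinatewise derivatives are assumed, so the multivariate Taylor formula is proved by
induction on the dimension: a one-variable Lagrange expansion in the first coordinate, followed
by the expansion of each of its coefficients in the remaining coordinates. The top-order
derivatives then appear at intermediate points no farther from `x` than `y`, and replacing them by
their values at `x` costs `M ‖y - x‖^γ` each. Hence
`|R(y)| ≤ M ‖y - x‖^γ ∑_{|β| = |s|} |(y - x)^β| / β! ≤ M h^(γ + |s|) ∑_{|β| = |s|} 1 / β!`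
on the support of the weights, and `∑ⱼ |wⱼ(x)| ≤ C₃ h^(-|s|)` gives the bound.
-/

open Set Finset
open scoped Nat

open Finset.Nat in
theorem Finset.Nat.sum_antidiagonalTuple_succ {M : Type*} [AddCommMonoid M] (d n : ℕ)
    (g : (Fin (d + 1) → ℕ) → M) :
    ∑ β ∈ antidiagonalTuple (d + 1) n, g β =
      ∑ k ∈ range (n + 1), ∑ β ∈ antidiagonalTuple d (n - k), g (Fin.cons k β) := by
  rw [sum_sigma']
  refine sum_nbij' (fun β => (⟨β 0, Fin.tail β⟩ : Σ _ : ℕ, Fin d → ℕ))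
    (fun σ => Fin.cons σ.1 σ.2) ?_ ?_ ?_ ?_ ?_
  · intro β hβ
    simp only [mem_antidiagonalTuple, Fin.sum_univ_succ] at hβ
    simp only [mem_sigma, mem_range, mem_antidiagonalTuple, Fin.tail]
    omega
  · rintro ⟨k, β⟩ hσ
    simp only [mem_sigma, mem_range, mem_antidiagonalTuple] at hσ
    simp only [mem_antidiagonalTuple, Fin.sum_cons]
    omega
  · intro β _
    exact Fin.cons_self_tail β
  · rintro ⟨k, β⟩ _
    simp
  · intro β _
    rw [Fin.cons_self_tail]

theorem Fin.cons_mem_univ_pi {n : ℕ} {α : Fin (n + 1) → Type*} {I : ∀ i, Set (α i)} {t : α 0}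
    {p : ∀ i : Fin n, α i.succ} :
    (Fin.cons t p : ∀ i, α i) ∈ univ.pi I ↔ t ∈ I 0 ∧ p ∈ univ.pi fun i : Fin n => I i.succ := by
  simp [Fin.forall_fin_succ]

theorem iteratedDerivWithin_eqOn_of_hasDerivWithinAt {s : Set ℝ} (hs : UniqueDiffOn ℝ s)
    {f : ℕ → ℝ → ℝ} {n : ℕ}
    (hf : ∀ k < n, ∀ t ∈ s, HasDerivWithinAt (f k) (f (k + 1) t) s t) :
    ∀ k ≤ n, EqOn (iteratedDerivWithin k (f 0) s) (f k) s := by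
  intro k hk
  induction k with
  | zero => exact fun t _ => by rw [iteratedDerivWithin_zero]
  | succ k ih =>
    intro t ht
    rw [iteratedDerivWithin_succ,
      derivWithin_congr (ih (by omega)) (ih (by omega) ht)]
    exact (hf k hk t ht).derivWithin (hs t ht)

theorem exists_taylor_lagrange_of_hasDerivWithinAt {f : ℕ → ℝ → ℝ} {a b : ℝ} {n : ℕ}
    (hf : ∀ k < n, ∀ t ∈ uIcc a b, HasDerivWithinAt (f k) (f (k + 1) t) (uIcc a b) t) :
    ∃ ξ ∈ uIcc a b, f 0 b =
      ∑ k ∈ range n, (b - a) ^ k / k ! * f k a + (b - a) ^ n / n ! * f n ξ := by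
  rcases n with _ | m
  · exact ⟨b, right_mem_uIcc, by simp⟩
  rcases eq_or_ne a b with rfl | hab
  · exact ⟨a, left_mem_uIcc, by simp [sum_range_succ']⟩
  have hs := uniqueDiffOn_uIcc hab
  have heq := iteratedDerivWithin_eqOn_of_hasDerivWithinAt hs hf
  have hdiff : ∀ k < m + 1, DifferentiableOn ℝ (iteratedDerivWithin k (f 0) (uIcc a b))
      (uIcc a b) := fun k hk t ht =>
    ((hf k hk t ht).differentiableWithinAt).congr (heq k hk.le) (heq k hk.le ht)
  have hcont : ContDiffOn ℝ m (f 0) (uIcc a b) :=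
    contDiffOn_of_continuousOn_differentiableOn_deriv
      (fun k hk => (hdiff k (Nat.lt_succ_of_le (by exact_mod_cast hk))).continuousOn)
      (fun k hk => hdiff k (Nat.lt_succ_of_lt (by exact_mod_cast hk)))
  obtain ⟨ξ, hξ, h⟩ := taylor_mean_remainder_lagrange hab hcont
    ((hdiff m m.lt_succ_self).mono uIoo_subset_uIcc_self)
  refine ⟨ξ, uIoo_subset_uIcc_self hξ, ?_⟩
  rw [heq (m + 1) le_rfl (uIoo_subset_uIcc_self hξ), taylor_within_apply] at h
  have hpoly : ∑ k ∈ range (m + 1), ((k ! : ℝ)⁻¹ * (b - a) ^ k) •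
      iteratedDerivWithin k (f 0) (uIcc a b) a = ∑ k ∈ range (m + 1), (b - a) ^ k / k ! * f k a :=
    sum_congr rfl fun k hk => by
      rw [heq k (by simp at hk; omega) left_mem_uIcc, smul_eq_mul]
      ring
  rw [hpoly] at h
  linear_combination h

section

variable {d : ℕ}

theorem Fin.dist_cons_cons_le {α : Type*} [PseudoMetricSpace α] {a : α} {p q : Fin d → α} :
    dist (Fin.cons a p : Fin (d + 1) → α) (Fin.cons a q) ≤ dist p q := by
  refine (dist_pi_le_iff dist_nonneg).2 fun i => ?_
  refine Fin.cases ?_ (fun j => ?_) i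
  · simp
  · simpa using dist_le_pi_dist p q j

theorem Fin.dist_tail_le {α : Type*} [PseudoMetricSpace α] (x y : Fin (d + 1) → α) :
    dist (Fin.tail y) (Fin.tail x) ≤ dist y x :=
  (dist_pi_le_iff dist_nonneg).2 fun i => dist_le_pi_dist y x i.succ

theorem dist_cons_tail_le_of_mem_uIcc {x y : Fin (d + 1) → ℝ} {ξ : ℝ} (hξ : ξ ∈ uIcc (x 0) (y 0)) :
    dist (Fin.cons ξ (Fin.tail y) : Fin (d + 1) → ℝ) x ≤ dist y x := by
  refine (dist_pi_le_iff dist_nonneg).2 fun i => ?_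
  refine Fin.cases ?_ (fun j => ?_) i
  · exact (Real.dist_right_le_of_mem_uIcc (uIcc_comm (x 0) (y 0) ▸ hξ)).trans
      (dist_le_pi_dist y x 0)
  · exact dist_le_pi_dist y x j.succ

noncomputable def taylorMonomial (v : Fin d → ℝ) (β : Fin d → ℕ) : ℝ :=
  (∏ i, v i ^ β i) / ∏ i, ((β i)! : ℝ)

noncomputable def taylorSum (D : (Fin d → ℕ) → (Fin d → ℝ) → ℝ) (x y : Fin d → ℝ) (n : ℕ) : ℝ :=
  ∑ m ∈ range (n + 1), ∑ β ∈ Nat.antidiagonalTuple d m, D β x * taylorMonomial (y - x) β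

theorem taylorMonomial_zero (v : Fin d → ℝ) : taylorMonomial v 0 = 1 := by
  simp [taylorMonomial]

theorem taylorMonomial_cons (a : ℝ) (v : Fin d → ℝ) (k : ℕ) (β : Fin d → ℕ) :
    taylorMonomial (Fin.cons a v) (Fin.cons k β) = a ^ k / k ! * taylorMonomial v β := by
  simp only [taylorMonomial, Fin.prod_univ_succ, Fin.cons_zero, Fin.cons_succ]
  ring

theorem taylorSum_zero (D : (Fin d → ℕ) → (Fin d → ℝ) → ℝ) (x y : Fin d → ℝ) :
    taylorSum D x y 0 = D 0 x := by
  simp [taylorSum, Nat.antidiagonalTuple_zero_right, taylorMonomial_zero]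

theorem sub_eq_cons_tail_sub (x y : Fin (d + 1) → ℝ) :
    y - x = Fin.cons (y 0 - x 0) (Fin.tail y - Fin.tail x) :=
  (Fin.cons_self_tail (y - x)).symm

theorem taylorSum_succ (D : (Fin (d + 1) → ℕ) → (Fin (d + 1) → ℝ) → ℝ) (x y : Fin (d + 1) → ℝ)
    (n : ℕ) :
    taylorSum D x y n = ∑ k ∈ range (n + 1), (y 0 - x 0) ^ k / k ! *
      taylorSum (fun β p => D (Fin.cons k β) (Fin.cons (x 0) p)) (Fin.tail x) (Fin.tail y)
        (n - k) := by
  simp only [taylorSum, Nat.sum_antidiagonalTuple_succ]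
  rw [sum_range_diag_flip (n + 1) fun k l => ∑ β ∈ Nat.antidiagonalTuple d l,
    D (Fin.cons k β) x * taylorMonomial (y - x) (Fin.cons k β)]
  simp only [mul_sum]
  refine sum_congr rfl fun k hk => ?_
  rw [show n + 1 - k = n - k + 1 by simp at hk; omega]
  refine sum_congr rfl fun m _ => sum_congr rfl fun β _ => ?_
  rw [sub_eq_cons_tail_sub, taylorMonomial_cons, Fin.cons_self_tail]
  ring

theorem sum_abs_taylorMonomial_succ (x y : Fin (d + 1) → ℝ) (n : ℕ) :
    ∑ β ∈ Nat.antidiagonalTuple (d + 1) n, |taylorMonomial (y - x) β| =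
      ∑ k ∈ range (n + 1), |(y 0 - x 0) ^ k / k !| *
        ∑ β ∈ Nat.antidiagonalTuple d (n - k), |taylorMonomial (Fin.tail y - Fin.tail x) β| := by
  simp only [Nat.sum_antidiagonalTuple_succ, mul_sum, sub_eq_cons_tail_sub x y,
    taylorMonomial_cons, abs_mul]

/-- `D β` plays the role of `∂^β (D 0)`, differentiated one coordinate at a time inside the box. -/
def IsPartialDerivFamily (I : Fin d → Set ℝ) (n : ℕ) (D : (Fin d → ℕ) → (Fin d → ℝ) → ℝ) :
    Prop :=
  ∀ β : Fin d → ℕ, ∑ i, β i < n → ∀ i, ∀ x ∈ univ.pi I,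
    HasDerivWithinAt (fun t => D β (Function.update x i t)) (D (Function.update β i (β i + 1)) x)
      (I i) (x i)

def IsHolderAtOrder (I : Fin d → Set ℝ) (n : ℕ) (M γ : ℝ)
    (D : (Fin d → ℕ) → (Fin d → ℝ) → ℝ) : Prop :=
  ∀ β : Fin d → ℕ, ∑ i, β i = n → ∀ x ∈ univ.pi I, ∀ y ∈ univ.pi I,
    |D β x - D β y| ≤ M * dist x y ^ γ

theorem IsPartialDerivFamily.hasDerivWithinAt_cons_zero {I : Fin (d + 1) → Set ℝ} {n : ℕ}
    {D : (Fin (d + 1) → ℕ) → (Fin (d + 1) → ℝ) → ℝ} (hD : IsPartialDerivFamily I n D) {k : ℕ}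
    (hk : k < n) {t : ℝ} (ht : t ∈ I 0) {p : Fin d → ℝ} (hp : p ∈ univ.pi fun i => I i.succ) :
    HasDerivWithinAt (fun s => D (Fin.cons k 0) (Fin.cons s p)) (D (Fin.cons (k + 1) 0)
      (Fin.cons t p)) (I 0) t := by
  have := hD (Fin.cons k 0) (by simpa using hk) 0 (Fin.cons t p) (Fin.cons_mem_univ_pi.2 ⟨ht, hp⟩)
  simpa only [Fin.update_cons_zero, Fin.cons_zero] using this

theorem IsPartialDerivFamily.cons {I : Fin (d + 1) → Set ℝ} {n : ℕ}
    {D : (Fin (d + 1) → ℕ) → (Fin (d + 1) → ℝ) → ℝ} (hD : IsPartialDerivFamily I n D) (k : ℕ)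
    {a : ℝ} (ha : a ∈ I 0) :
    IsPartialDerivFamily (fun i => I i.succ) (n - k)
      (fun β p => D (Fin.cons k β) (Fin.cons a p)) := by
  intro β hβ i p hp
  have := hD (Fin.cons k β) (by rw [Fin.sum_cons]; omega) i.succ (Fin.cons a p)
    (Fin.cons_mem_univ_pi.2 ⟨ha, hp⟩)
  simpa only [← Fin.cons_update, Fin.cons_succ] using this

theorem IsHolderAtOrder.cons {I : Fin (d + 1) → Set ℝ} {n : ℕ} {M γ : ℝ}
    {D : (Fin (d + 1) → ℕ) → (Fin (d + 1) → ℝ) → ℝ} (hD : IsHolderAtOrder I n M γ D)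
    (hM : 0 ≤ M) (hγ : 0 ≤ γ) {k : ℕ} (hk : k ≤ n) {a : ℝ} (ha : a ∈ I 0) :
    IsHolderAtOrder (fun i => I i.succ) (n - k) M γ
      (fun β p => D (Fin.cons k β) (Fin.cons a p)) := by
  intro β hβ p hp q hq
  refine (hD (Fin.cons k β) (by rw [Fin.sum_cons]; omega) _ (Fin.cons_mem_univ_pi.2 ⟨ha, hp⟩) _
    (Fin.cons_mem_univ_pi.2 ⟨ha, hq⟩)).trans ?_
  gcongr
  exact Fin.dist_cons_cons_le

theorem IsPartialDerivFamily.exists_sub_taylorSum_eq {I : Fin (d + 1) → Set ℝ}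
    [∀ i, (I i).OrdConnected] {n : ℕ} {D : (Fin (d + 1) → ℕ) → (Fin (d + 1) → ℝ) → ℝ}
    (hD : IsPartialDerivFamily I n D) {x y : Fin (d + 1) → ℝ} (hx : x ∈ univ.pi I)
    (hy : y ∈ univ.pi I) :
    ∃ ξ ∈ uIcc (x 0) (y 0), D 0 y - taylorSum D x y n =
      ∑ k ∈ range n, (y 0 - x 0) ^ k / k ! * (D (Fin.cons k 0) (Fin.cons (x 0) (Fin.tail y)) -
        taylorSum (fun β p => D (Fin.cons k β) (Fin.cons (x 0) p)) (Fin.tail x) (Fin.tail y)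
          (n - k)) +
      (y 0 - x 0) ^ n / n ! *
        (D (Fin.cons n 0) (Fin.cons ξ (Fin.tail y)) - D (Fin.cons n 0) x) := by
  have hsub : uIcc (x 0) (y 0) ⊆ I 0 :=
    Set.OrdConnected.uIcc_subset inferInstance (hx 0 (mem_univ _)) (hy 0 (mem_univ _))
  obtain ⟨ξ, hξ, htaylor⟩ := exists_taylor_lagrange_of_hasDerivWithinAt
    (f := fun k t => D (Fin.cons k 0) (Fin.cons t (Fin.tail y))) fun k hk t ht =>
      (hD.hasDerivWithinAt_cons_zero hk (hsub ht) fun i _ => hy i.succ (mem_univ _)).mono hsub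
  refine ⟨ξ, hξ, ?_⟩
  have hy0 : D 0 y = D (Fin.cons 0 0) (Fin.cons (y 0) (Fin.tail y)) := by
    rw [Fin.cons_self_tail, ← Fin.cons_self_tail (0 : Fin (d + 1) → ℕ)]
    rfl
  rw [hy0, htaylor, taylorSum_succ, sum_range_succ, Nat.sub_self, taylorSum_zero,
    Fin.cons_self_tail]
  simp only [mul_sub, sum_sub_distrib]
  ring

theorem abs_sub_taylorSum_le {I : Fin d → Set ℝ} [∀ i, (I i).OrdConnected] {n : ℕ} {M γ : ℝ}
    {D : (Fin d → ℕ) → (Fin d → ℝ) → ℝ} (hM : 0 ≤ M) (hγ : 0 ≤ γ)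
    (hD : IsPartialDerivFamily I n D) (hH : IsHolderAtOrder I n M γ D) {x y : Fin d → ℝ}
    (hx : x ∈ univ.pi I) (hy : y ∈ univ.pi I) :
    |D 0 y - taylorSum D x y n| ≤
      M * dist y x ^ γ * ∑ β ∈ Nat.antidiagonalTuple d n, |taylorMonomial (y - x) β| := by
  induction d generalizing n with
  | zero =>
    obtain rfl : y = x := Subsingleton.elim y x
    have hsum : taylorSum D y y n = D 0 y := by
      rcases n with _ | n
      · exact taylorSum_zero D y y
      · simp [taylorSum, sum_range_succ', taylorMonomial]
    rw [hsum, sub_self, abs_zero]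
    positivity
  | succ d ih =>
    obtain ⟨ξ, hξ, hsplit⟩ := hD.exists_sub_taylorSum_eq hx hy
    have hx0 : x 0 ∈ I 0 := hx 0 (mem_univ _)
    have hx' : Fin.tail x ∈ univ.pi fun i => I i.succ := fun i _ => hx i.succ (mem_univ _)
    have hy' : Fin.tail y ∈ univ.pi fun i => I i.succ := fun i _ => hy i.succ (mem_univ _)
    set c : ℕ → ℝ := fun k => (y 0 - x 0) ^ k / (k ! : ℝ)
    set B : ℕ → ℝ := fun l => M * dist y x ^ γ *
      ∑ β ∈ Nat.antidiagonalTuple d l, |taylorMonomial (Fin.tail y - Fin.tail x) β|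
    have hslice : ∀ k ∈ range n, |D (Fin.cons k 0) (Fin.cons (x 0) (Fin.tail y)) -
        taylorSum (fun β p => D (Fin.cons k β) (Fin.cons (x 0) p)) (Fin.tail x) (Fin.tail y)
          (n - k)| ≤ B (n - k) := fun k hk =>
      (ih (hD.cons k hx0) (hH.cons hM hγ (by simp at hk; omega) hx0) hx' hy').trans
        (by simp only [B]; gcongr; exact Fin.dist_tail_le x y)
    have htop : |D (Fin.cons n 0) (Fin.cons ξ (Fin.tail y)) - D (Fin.cons n 0) x| ≤ B 0 := by
      simp only [B, Nat.antidiagonalTuple_zero_right, sum_singleton, taylorMonomial_zero,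
        abs_one, mul_one]
      have hξ' : Fin.cons ξ (Fin.tail y) ∈ univ.pi I := Fin.cons_mem_univ_pi.2
        ⟨Set.OrdConnected.uIcc_subset inferInstance hx0 (hy 0 (mem_univ _)) hξ, hy'⟩
      refine (hH (Fin.cons n 0) (by simp) _ hξ' x hx).trans ?_
      gcongr
      exact dist_cons_tail_le_of_mem_uIcc hξ
    calc |D 0 y - taylorSum D x y n|
        ≤ ∑ k ∈ range n, |c k| * B (n - k) + |c n| * B (n - n) := by
          rw [hsplit, Nat.sub_self]
          refine (abs_add_le _ _).trans (add_le_add ((abs_sum_le_sum_abs _ _).trans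
            (sum_le_sum fun k hk => ?_)) ?_) <;> rw [abs_mul] <;> gcongr
          exact hslice k hk
      _ = M * dist y x ^ γ * ∑ β ∈ Nat.antidiagonalTuple (d + 1) n, |taylorMonomial (y - x) β| := by
          rw [← sum_range_succ (fun k => |c k| * B (n - k)), sum_abs_taylorMonomial_succ, mul_sum]
          exact sum_congr rfl fun k _ => by ring

theorem sum_mul_taylorSum_eq_of_moments {ι : Type*} [Fintype ι]
    (D : (Fin d → ℕ) → (Fin d → ℝ) → ℝ) (x : Fin d → ℝ) (xj : ι → Fin d → ℝ) (w : ι → ℝ)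
    (s : Fin d → ℕ)
    (hrep : ∀ r : Fin d → ℕ, ∑ i, r i ≤ ∑ i, s i →
      ∑ j, (∏ i, (xj j i - x i) ^ r i) * w j = if r = s then ∏ i, ((s i)! : ℝ) else 0) :
    ∑ j, w j * taylorSum D x (xj j) (∑ i, s i) = D s x := by
  have hterm : ∀ m ∈ range (∑ i, s i + 1), ∀ β ∈ Nat.antidiagonalTuple d m,
      ∑ j, w j * (D β x * taylorMonomial (xj j - x) β) =
        if β = s then D s x else 0 := by
    intro m hm β hβ
    rw [Nat.mem_antidiagonalTuple] at hβ
    have hmom := hrep β (by simp at hm; omega)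
    calc ∑ j, w j * (D β x * taylorMonomial (xj j - x) β)
        = D β x / (∏ i, ((β i)! : ℝ)) * ∑ j, (∏ i, (xj j i - x i) ^ β i) * w j := by
          simp only [taylorMonomial, mul_sum, Pi.sub_apply]
          exact sum_congr rfl fun j _ => by ring
      _ = if β = s then D s x else 0 := by
          rw [hmom]
          split_ifs with h
          · subst h
            field_simp
          · exact mul_zero _
  simp only [taylorSum, mul_sum]
  rw [sum_comm, sum_congr rfl fun m hm => sum_comm.trans (sum_congr rfl (hterm m hm))]
  simp [sum_ite_eq', Nat.mem_antidiagonalTuple]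

theorem sum_abs_taylorMonomial_le {v : Fin d → ℝ} {h : ℝ} (hv : ‖v‖ ≤ h) (n : ℕ) :
    ∑ β ∈ Nat.antidiagonalTuple d n, |taylorMonomial v β| ≤
      h ^ n * ∑ β ∈ Nat.antidiagonalTuple d n, 1 / ∏ i, ((β i)! : ℝ) := by
  rw [mul_sum]
  refine sum_le_sum fun β hβ => ?_
  rw [Nat.mem_antidiagonalTuple] at hβ
  have hprod : ∏ i, |v i| ^ β i ≤ h ^ n := by
    rw [← hβ, ← prod_pow_eq_pow_sum]
    gcongr with i
    exact (norm_le_pi_norm v i).trans hv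
  rw [taylorMonomial, abs_div, abs_prod, abs_of_pos (by positivity), mul_one_div]
  simp only [abs_pow]
  gcongr

theorem abs_sub_taylorSum_le_of_dist_le {I : Fin d → Set ℝ} [∀ i, (I i).OrdConnected] {n : ℕ}
    {M γ h : ℝ} {D : (Fin d → ℕ) → (Fin d → ℝ) → ℝ} (hM : 0 ≤ M) (hγ : 0 ≤ γ)
    (hD : IsPartialDerivFamily I n D) (hH : IsHolderAtOrder I n M γ D) {x y : Fin d → ℝ}
    (hx : x ∈ univ.pi I) (hy : y ∈ univ.pi I) (hxy : dist y x ≤ h) :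
    |D 0 y - taylorSum D x y n| ≤
      M * h ^ γ * (h ^ n * ∑ β ∈ Nat.antidiagonalTuple d n, 1 / ∏ i, ((β i)! : ℝ)) := by
  have hh : 0 ≤ h := dist_nonneg.trans hxy
  refine (abs_sub_taylorSum_le hM hγ hD hH hx hy).trans (mul_le_mul (by gcongr) ?_
    (sum_nonneg fun _ _ => abs_nonneg _) (by positivity))
  exact sum_abs_taylorMonomial_le (by rwa [← dist_eq_norm]) n

end

theorem linear_estimator_smooth_path_bound_general
    {d : ℕ} {ι : Type*} [Fintype ι]
    (γ M C3 h : ℝ) (hγ : 0 < γ) (hM : 0 < M)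
    (hh : 0 < h)
    (s : Fin d → ℕ)
    (D : (Fin d → ℕ) → (Fin d → ℝ) → ℝ)
    (hderiv : ∀ β : Fin d → ℕ, (∑ i, β i) < (∑ i, s i) → ∀ i : Fin d,
      ∀ x ∈ Icc (0 : Fin d → ℝ) 1,
        HasDerivWithinAt (fun t : ℝ => D β (Function.update x i t))
          (D (Function.update β i (β i + 1)) x) (Icc (0:ℝ) 1) (x i))
    (hhold : ∀ β : Fin d → ℕ, (∑ i, β i) = (∑ i, s i) →
      ∀ x ∈ Icc (0 : Fin d → ℝ) 1, ∀ y ∈ Icc (0 : Fin d → ℝ) 1,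
        |D β x - D β y| ≤ M * dist x y ^ γ)
    (xj : ι → (Fin d → ℝ)) (hxj : ∀ j, xj j ∈ Icc (0 : Fin d → ℝ) 1)
    (w : (Fin d → ℝ) → ι → ℝ)
    (hrep : ∀ x ∈ Icc (0 : Fin d → ℝ) 1, ∀ r : Fin d → ℕ, (∑ i, r i) ≤ (∑ i, s i) →
      ∑ j, (∏ i, (xj j i - x i) ^ r i) * w x j
        = if r = s then (∏ i, (Nat.factorial (s i) : ℝ)) else 0)
    (hloc : ∀ x ∈ Icc (0 : Fin d → ℝ) 1, ∀ j, h < dist x (xj j) → w x j = 0)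
    (hsum : ∀ x ∈ Icc (0 : Fin d → ℝ) 1, ∑ j, |w x j| ≤ C3 / h ^ (∑ i, s i)) :
    ∀ x ∈ Icc (0 : Fin d → ℝ) 1,
      |(∑ j, w x j * D 0 (xj j)) - D s x| ≤
        M * h ^ γ * C3 *
          ∑ k ∈ Finset.Nat.antidiagonalTuple d (∑ i, s i),
            (1 / ∏ i, (Nat.factorial (k i) : ℝ)) := by
  intro x hx
  have hmom := sum_mul_taylorSum_eq_of_moments D x xj (w x) s (hrep x hx)
  set n := ∑ i, s i
  set E := M * h ^ γ * (h ^ n * ∑ β ∈ Nat.antidiagonalTuple d n, 1 / ∏ i, ((β i)! : ℝ))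
  have hcube : Icc (0 : Fin d → ℝ) 1 = univ.pi fun _ => Icc 0 1 := (pi_univ_Icc 0 1).symm
  have hD : IsPartialDerivFamily (fun _ => Icc (0 : ℝ) 1) n D :=
    fun β hβ i p hp => hderiv β hβ i p (hcube ▸ hp)
  have hH : IsHolderAtOrder (fun _ => Icc (0 : ℝ) 1) n M γ D :=
    fun β hβ p hp q hq => hhold β hβ p (hcube ▸ hp) q (hcube ▸ hq)
  have hterm : ∀ j, |w x j| * |D 0 (xj j) - taylorSum D x (xj j) n| ≤ |w x j| * E := by
    intro j
    by_cases hj : h < dist x (xj j)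
    · simp [hloc x hx j hj]
    · gcongr
      exact abs_sub_taylorSum_le_of_dist_le hM.le hγ.le hD hH (hcube ▸ hx) (hcube ▸ hxj j)
        (by rw [dist_comm]; exact not_lt.1 hj)
  calc |∑ j, w x j * D 0 (xj j) - D s x|
      = |∑ j, w x j * (D 0 (xj j) - taylorSum D x (xj j) n)| := by
        rw [← hmom, ← sum_sub_distrib]
        simp only [mul_sub]
    _ ≤ (∑ j, |w x j|) * E := by
        rw [sum_mul]
        exact (abs_sum_le_sum_abs _ _).trans (sum_le_sum fun j _ => by rw [abs_mul]; exact hterm j)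
    _ ≤ C3 / h ^ n * E := by gcongr; exact hsum x hx
    _ = M * h ^ γ * C3 * ∑ β ∈ Nat.antidiagonalTuple d n, 1 / ∏ i, ((β i)! : ℝ) := by
        simp only [E]
        field_simp

/-- Uniform approximation of `∂^s Z` by a linear estimator, for a path `Z` with partial
derivatives up to order `|s|` (encoded by the family `D`, `D 0 = Z`), all derivatives of
order `≤ |s|` bounded by `M`, and those of order `|s|` Hölder continuous of exponent
`γ ∈ (0,1]` with constant `M` in sup-norm. The weights satisfy the moment conditions up
to order `|s|`, localize at bandwidth `h` and have absolute sums `≤ C₃ h^{-|s|}`. Then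
`sup_x |∑_j w_j(x) Z(x_j) - ∂^s Z(x)| ≤ M h^γ C₃ ∑_{|k|=|s|} 1/k!`. -/
theorem linear_estimator_smooth_path_bound
    {d : ℕ} {ι : Type*} [Fintype ι]
    (γ M C3 h : ℝ) (hγ : 0 < γ) (hγ1 : γ ≤ 1) (hM : 0 < M) (hC3 : 0 < C3)
    (hh : 0 < h) (hh1 : h ≤ 1)
    (s : Fin d → ℕ)
    (D : (Fin d → ℕ) → (Fin d → ℝ) → ℝ)
    (hderiv : ∀ β : Fin d → ℕ, (∑ i, β i) < (∑ i, s i) → ∀ i : Fin d,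
      ∀ x ∈ Icc (0 : Fin d → ℝ) 1,
        HasDerivWithinAt (fun t : ℝ => D β (Function.update x i t))
          (D (Function.update β i (β i + 1)) x) (Icc (0:ℝ) 1) (x i))
    (hbound : ∀ β : Fin d → ℕ, (∑ i, β i) ≤ (∑ i, s i) →
      ∀ x ∈ Icc (0 : Fin d → ℝ) 1, |D β x| ≤ M)
    (hhold : ∀ β : Fin d → ℕ, (∑ i, β i) = (∑ i, s i) →
      ∀ x ∈ Icc (0 : Fin d → ℝ) 1, ∀ y ∈ Icc (0 : Fin d → ℝ) 1,
        |D β x - D β y| ≤ M * dist x y ^ γ)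
    (xj : ι → (Fin d → ℝ)) (hxj : ∀ j, xj j ∈ Icc (0 : Fin d → ℝ) 1)
    (w : (Fin d → ℝ) → ι → ℝ)
    (hrep : ∀ x ∈ Icc (0 : Fin d → ℝ) 1, ∀ r : Fin d → ℕ, (∑ i, r i) ≤ (∑ i, s i) →
      ∑ j, (∏ i, (xj j i - x i) ^ r i) * w x j
        = if r = s then (∏ i, (Nat.factorial (s i) : ℝ)) else 0)
    (hloc : ∀ x ∈ Icc (0 : Fin d → ℝ) 1, ∀ j, h < dist x (xj j) → w x j = 0)
    (hsum : ∀ x ∈ Icc (0 : Fin d → ℝ) 1, ∑ j, |w x j| ≤ C3 / h ^ (∑ i, s i)) :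
    ∀ x ∈ Icc (0 : Fin d → ℝ) 1,
      |(∑ j, w x j * D 0 (xj j)) - D s x| ≤
        M * h ^ γ * C3 *
          ∑ k ∈ Finset.Nat.antidiagonalTuple d (∑ i, s i),
            (1 / ∏ i, (Nat.factorial (k i) : ℝ)) :=
  linear_estimator_smooth_path_bound_general γ M C3 h hγ hM hh s D hderiv hhold xj hxj w hrep hloc
    hsum
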